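/- arXiv:1803.06847 — 3 statements merged into one kernel-verified Lean document; each statement's English description precedes it below -/
import Mathlib

section
/- For every p ≥ 1 and every n ≥ 2, a random vector X uniformly distributed on the ℓ_p unit ball B_p^n satisfies E[X_1² X_2²] − E[X_1²]·E[X_2²] < 0, where X_1, X_2 are the first two coordinates of X. Equivalently, setting f(η1,η2) = E[⟨X,η1⟩²⟨X,η2⟩²] − E[⟨X,η1⟩²]·E[⟨X,η2⟩²], one has f(e1,e2) < 0. -/
open MeasureTheory Real
open scoped RealInnerProductSpace ENNReal

noncomputable section

/-- `ℝⁿ` with the Euclidean structure. -/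
abbrev E (n : ℕ) := EuclideanSpace ℝ (Fin n)

/-- The unit ball of the `ℓ_p` norm on `ℝⁿ`. -/
def lpBall (n : ℕ) (p : ℝ) : Set (E n) := {x | ∑ i, |x i| ^ p ≤ 1}

/-- The uniform probability measure (normalized Lebesgue measure) on a set `K ⊆ ℝⁿ`. -/
def unif {n : ℕ} (K : Set (E n)) : Measure (E n) := (volume K)⁻¹ • volume.restrict K

/-- `f(η₁,η₂) = E⟨X,η₁⟩²⟨X,η₂⟩² - E⟨X,η₁⟩² E⟨X,η₂⟩²` for `X` distributed according to `μ`. -/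
def covf {n : ℕ} (μ : Measure (E n)) (a b : E n) : ℝ :=
  (∫ x, ⟪x, a⟫ ^ 2 * ⟪x, b⟫ ^ 2 ∂μ) - (∫ x, ⟪x, a⟫ ^ 2 ∂μ) * (∫ x, ⟪x, b⟫ ^ 2 ∂μ)

/-- The canonical basis vectors of `ℝⁿ`. -/
def stdb {n : ℕ} (i : Fin n) : E n := EuclideanSpace.single i 1

/-!
Write `N x = ∑ |xᵢ|ᵖ`. For `g` homogeneous of degree `d`, slicing `ℝⁿ` along the level sets of `N`
gives `∫ g e^{-N} = Γ((n + d)/p + 1) ∫_{B_p^n} g`, while for a monomial `g` the left side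
factorises into one-dimensional Gamma integrals. Hence, with `r = Γ(3/p)/Γ(1/p)`,
`E ∏_{i ∈ S} Xᵢ² = r^|S| Γ(n/p + 1) / Γ((n + 2|S|)/p + 1)`, and with `A = n/p + 1`, `t = 2/p`,
`E X₁²X₂² - E X₁² E X₂² = r² Γ(A) (Γ(A + t)² - Γ(A) Γ(A + 2t)) / (Γ(A + t)² Γ(A + 2t))`,
which is negative by strict log-convexity of `Γ`.
-/

open Set Function Module Fintype
open scoped Pointwise

theorem integral_abs_rpow_mul_exp_neg_abs_rpow {p q : ℝ} (hp : 0 < p) (hq : -1 < q) :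
    ∫ t : ℝ, |t| ^ q * exp (-|t| ^ p) = 2 / p * Gamma ((q + 1) / p) := by
  rw [integral_comp_abs (f := fun t => t ^ q * exp (-t ^ p)),
    integral_rpow_mul_exp_neg_rpow hp hq]
  ring

theorem setIntegral_rpow_mul_exp_neg_mul_rpow_sub_one {A s : ℝ} (hs : 0 < A + s) :
    ∫ x in Ioi 0, x ^ s * (exp (-x) * x ^ (A - 1)) = Gamma (A + s) := by
  rw [Gamma_eq_integral hs]
  refine setIntegral_congr_fun measurableSet_Ioi fun x (hx : 0 < x) => ?_
  rw [show A + s - 1 = s + (A - 1) by ring, rpow_add hx]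
  ring

theorem Gamma_add_sq_lt {A t : ℝ} (hA : 0 < A) (ht : 0 < t) :
    Gamma (A + t) ^ 2 < Gamma A * Gamma (A + 2 * t) := by
  have hΓA := Gamma_pos_of_pos hA
  set m := Gamma (A + t) / Gamma A
  have hm : 0 < m := div_pos (Gamma_pos_of_pos (by positivity)) hΓA
  set w : ℝ → ℝ := fun x => exp (-x) * x ^ (A - 1)
  have hmoment : ∀ s, 0 < A + s →
      IntegrableOn (fun x => x ^ s * w x) (Ioi 0) ∧ ∫ x in Ioi 0, x ^ s * w x = Gamma (A + s) :=
    fun s hs => have h := setIntegral_rpow_mul_exp_neg_mul_rpow_sub_one hs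
      ⟨.of_integral_ne_zero (h ▸ (Gamma_pos_of_pos hs).ne'), h⟩
  obtain ⟨i2t, I2t⟩ := hmoment (2 * t) (by positivity)
  obtain ⟨it, It⟩ := hmoment t (by positivity)
  obtain ⟨i0, I0⟩ := hmoment 0 (by simpa)
  -- `Γ(A)Γ(A + 2t) - Γ(A + t)²` is `Γ(A)²` times the variance of `x ^ t` under the law `w / Γ(A)`.
  have hexpand : EqOn (fun x => (x ^ t - m) ^ 2 * w x)
      (fun x => x ^ (2 * t) * w x - 2 * m * (x ^ t * w x) + m ^ 2 * (x ^ (0 : ℝ) * w x))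
      (Ioi 0) := fun x (hx : 0 < x) => by
    simp only [rpow_zero, mul_comm 2 t, rpow_mul hx.le, rpow_two]; ring
  have hdiff : IntegrableOn (fun x => x ^ (2 * t) * w x - 2 * m * (x ^ t * w x)) (Ioi 0) :=
    i2t.sub (it.const_mul _)
  have hvar : ∫ x in Ioi 0, (x ^ t - m) ^ 2 * w x
      = Gamma (A + 2 * t) - 2 * m * Gamma (A + t) + m ^ 2 * Gamma A := by
    rw [setIntegral_congr_fun measurableSet_Ioi hexpand, integral_add hdiff (i0.const_mul _),
      integral_sub i2t (it.const_mul _), integral_const_mul, integral_const_mul, I2t, It, I0,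
      add_zero]
  have hpos : 0 < ∫ x in Ioi 0, (x ^ t - m) ^ 2 * w x := by
    have hint : IntegrableOn (fun x => (x ^ t - m) ^ 2 * w x) (Ioi 0) :=
      (hdiff.add (i0.const_mul _)).congr_fun hexpand.symm measurableSet_Ioi
    refine (setIntegral_pos_iff_support_of_nonneg_ae ?_ hint).2 ?_
    · filter_upwards [ae_restrict_mem measurableSet_Ioi] with x (hx : 0 < x)
      have : 0 < w x := by positivity
      positivity
    · have hsupp : Ioi (m ^ t⁻¹) ⊆ support (fun x => (x ^ t - m) ^ 2 * w x) ∩ Ioi 0 := by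
        intro x (hx : m ^ t⁻¹ < x)
        have hx0 : 0 < x := (rpow_pos_of_pos hm _).trans hx
        have hxt : m < x ^ t := by
          simpa [rpow_inv_rpow hm.le ht.ne'] using rpow_lt_rpow (by positivity) hx ht
        have : 0 < w x := by positivity
        exact ⟨by simp only [mem_support]; positivity, hx0⟩
      exact (by simp : (0 : ℝ≥0∞) < volume (Ioi (m ^ t⁻¹))).trans_le (measure_mono hsupp)
  rw [hvar] at hpos
  have hΓ : m * Gamma A = Gamma (A + t) := div_mul_cancel₀ _ hΓA.ne'
  nlinarith

theorem integral_mul_exp_neg_eq_integral_exp_neg_mul_setIntegral_le {α : Type*}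
    [MeasurableSpace α] {μ : Measure α} [SFinite μ] {g φ : α → ℝ} (hg : Measurable g)
    (hφ : Measurable φ) (hint : Integrable (fun x => g x * exp (-φ x)) μ) :
    ∫ x, g x * exp (-φ x) ∂μ = ∫ s, exp (-s) * ∫ x in {x | φ x ≤ s}, g x ∂μ := by
  set T : Set (α × ℝ) := {z | φ z.1 ≤ z.2}
  have hT : MeasurableSet T := measurableSet_le (hφ.comp measurable_fst) measurable_snd
  -- Fubini for `H`, using `∫_{φ x}^∞ e^{-s} ds = e^{-φ x}` on the slices `{x} × [φ x, ∞)`.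
  set H : α → ℝ → ℝ := fun x s => T.indicator (fun z => g z.1 * exp (-z.2)) (x, s)
  have hHx : ∀ x, H x = (Ici (φ x)).indicator (fun s => g x * exp (-s)) := fun x => by
    ext s; simp [H, T, indicator_apply]
  have hHs : ∀ s, (fun x => H x s) = {x | φ x ≤ s}.indicator (fun x => exp (-s) * g x) :=
    fun s => by ext x; simp [H, T, indicator_apply, mul_comm]
  have hexp : ∀ c, IntegrableOn (fun s => exp (-s)) (Ici c) := fun c => by
    rw [integrableOn_Ici_iff_integrableOn_Ioi]
    simpa using exp_neg_integrableOn_Ioi c one_pos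
  have hsec : ∀ (f : α → ℝ) x,
      ∫ s, (Ici (φ x)).indicator (fun s => f x * exp (-s)) s = f x * exp (-φ x) := fun f x => by
    rw [integral_indicator measurableSet_Ici, integral_const_mul, integral_Ici_eq_integral_Ioi,
      integral_exp_neg_Ioi]
  have hH : Integrable (uncurry H) (μ.prod volume) := by
    have hmeas : Measurable (uncurry H) :=
      ((hg.comp measurable_fst).mul measurable_snd.neg.exp).indicator hT
    refine (integrable_prod_iff hmeas.aestronglyMeasurable).2
      ⟨ae_of_all _ fun x => ?_, ?_⟩
    · change Integrable (H x)
      rw [hHx, integrable_indicator_iff measurableSet_Ici]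
      exact (hexp _).const_mul _
    · refine hint.norm.congr (ae_of_all _ fun x => ?_)
      have : (fun s => ‖H x s‖) = (Ici (φ x)).indicator (fun s => |g x| * exp (-s)) := by
        ext s; simp [hHx, norm_indicator_eq_indicator_norm, abs_exp]
      change _ = ∫ s, ‖H x s‖
      rw [this, hsec (fun x => |g x|)]
      simp [abs_exp]
  calc ∫ x, g x * exp (-φ x) ∂μ = ∫ x, (∫ s, H x s) ∂μ := by simp_rw [hHx, hsec]
    _ = ∫ s, ∫ x, H x s ∂μ := integral_integral_swap hH
    _ = ∫ s, exp (-s) * ∫ x in {x | φ x ≤ s}, g x ∂μ := by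
      simp_rw [hHs, integral_indicator (measurableSet_le hφ measurable_const),
        integral_const_mul]

section LpSublevel

variable {ι : Type*} [Fintype ι] {p : ℝ}

theorem integral_prod_abs_rpow_mul_exp_neg_sum_abs_rpow (hp : 0 < p) {q : ι → ℝ}
    (hq : ∀ i, -1 < q i) :
    ∫ x : ι → ℝ, (∏ i, |x i| ^ q i) * exp (-∑ i, |x i| ^ p)
      = ∏ i, 2 / p * Gamma ((q i + 1) / p) := by
  have hfactor : ∀ x : ι → ℝ, (∏ i, |x i| ^ q i) * exp (-∑ i, |x i| ^ p)
      = ∏ i, |x i| ^ q i * exp (-|x i| ^ p) := fun x => by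
    rw [Finset.prod_mul_distrib, ← Finset.sum_neg_distrib, exp_sum]
  simp_rw [hfactor, integral_fintype_prod_volume_eq_prod
    (fun i t => |t| ^ q i * exp (-|t| ^ p)), integral_abs_rpow_mul_exp_neg_abs_rpow hp (hq _)]

theorem integrable_prod_abs_rpow_mul_exp_neg_sum_abs_rpow (hp : 0 < p) {q : ι → ℝ}
    (hq : ∀ i, -1 < q i) :
    Integrable fun x : ι → ℝ => (∏ i, |x i| ^ q i) * exp (-∑ i, |x i| ^ p) :=
  .of_integral_ne_zero <| by
    rw [integral_prod_abs_rpow_mul_exp_neg_sum_abs_rpow hp hq]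
    refine Finset.prod_ne_zero_iff.2 fun i _ => ?_
    have := Gamma_pos_of_pos (div_pos (neg_lt_iff_pos_add.mp (hq i)) hp)
    positivity

def lpSublevel (p s : ℝ) : Set (ι → ℝ) := {x | ∑ i, |x i| ^ p ≤ s}

theorem sum_abs_rpow_smul (p c : ℝ) (x : ι → ℝ) :
    ∑ i, |(c • x) i| ^ p = |c| ^ p * ∑ i, |x i| ^ p := by
  simp_rw [Finset.mul_sum, Pi.smul_apply, smul_eq_mul, abs_mul,
    mul_rpow (abs_nonneg _) (abs_nonneg _)]

theorem lpSublevel_eq_smul (hp : 0 < p) {s : ℝ} (hs : 0 < s) :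
    lpSublevel p s = s ^ p⁻¹ • (lpSublevel p 1 : Set (ι → ℝ)) := by
  have hc : 0 < s ^ p⁻¹ := rpow_pos_of_pos hs _
  ext x
  rw [mem_smul_set_iff_inv_smul_mem₀ hc.ne', lpSublevel, lpSublevel, mem_ofPred, mem_ofPred,
    sum_abs_rpow_smul, abs_inv, abs_of_pos hc, inv_rpow hc.le, rpow_inv_rpow hs.le hp.ne',
    inv_mul_le_iff₀ hs, mul_one]

theorem setIntegral_lpSublevel_of_homogeneous (hp : 0 < p) {g : (ι → ℝ) → ℝ} {d : ℝ}
    (hg : ∀ c > 0, ∀ x, g (c • x) = c ^ d * g x) {s : ℝ} (hs : 0 < s) :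
    ∫ x in lpSublevel p s, g x = s ^ ((card ι + d) / p) * ∫ x in lpSublevel p 1, g x := by
  set c := s ^ p⁻¹
  have hc : 0 < c := rpow_pos_of_pos hs _
  have h := Measure.setIntegral_comp_smul_of_pos volume g (lpSublevel p 1) hc
  rw [← lpSublevel_eq_smul hp hs, finrank_fintype_fun_eq_card] at h
  simp_rw [hg c hc, integral_const_mul, smul_eq_mul] at h
  have hpow : s ^ ((card ι + d) / p) = c ^ card ι * c ^ d := by
    rw [← rpow_natCast, ← rpow_add hc, ← rpow_mul hs.le, div_eq_inv_mul]
  rw [hpow, mul_assoc, h, ← mul_assoc, mul_inv_cancel₀ (by positivity), one_mul]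

theorem integral_mul_exp_neg_sum_abs_rpow_of_homogeneous (hp : 0 < p) {g : (ι → ℝ) → ℝ}
    {d : ℝ} (hd : -p < card ι + d) (hgm : Measurable g)
    (hg : ∀ c > 0, ∀ x, g (c • x) = c ^ d * g x)
    (hint : Integrable fun x => g x * exp (-∑ i, |x i| ^ p)) :
    ∫ x, g x * exp (-∑ i, |x i| ^ p)
      = Gamma ((card ι + d) / p + 1) * ∫ x in lpSublevel p 1, g x := by
  set q := (card ι + d) / p
  have hq : 0 < q + 1 := by
    rw [div_add_one hp.ne']; exact div_pos (by linarith) hp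
  have hN : Measurable fun x : ι → ℝ => ∑ i, |x i| ^ p := by fun_prop
  have hlayer : (fun s => exp (-s) * ∫ x in lpSublevel p s, g x)
      =ᵐ[volume] (Ioi 0).indicator fun s => (∫ x in lpSublevel p 1, g x) * (exp (-s) * s ^ q) := by
    filter_upwards [Measure.ae_ne volume 0] with s hs
    rcases hs.lt_or_gt with hs | hs
    · have hempty : lpSublevel p s = (∅ : Set (ι → ℝ)) := eq_empty_of_forall_notMem fun x hx =>
        (hx.trans_lt hs).not_ge (Finset.sum_nonneg fun i _ => by positivity)
      simp [hempty, hs.not_gt]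
    · rw [indicator_of_mem (mem_Ioi.2 hs), setIntegral_lpSublevel_of_homogeneous hp hg hs]
      ring
  rw [integral_mul_exp_neg_eq_integral_exp_neg_mul_setIntegral_le hgm hN hint]
  change ∫ s, exp (-s) * ∫ x in lpSublevel p s, g x = _
  rw [integral_congr_ae hlayer, integral_indicator measurableSet_Ioi, integral_const_mul,
    Gamma_eq_integral hq, add_sub_cancel_right, mul_comm]

theorem setIntegral_lpSublevel_prod_abs_rpow (hp : 0 < p) {q : ι → ℝ} (hq : ∀ i, -1 < q i) :
    Gamma ((card ι + ∑ i, q i) / p + 1) * ∫ x in lpSublevel p 1, ∏ i, |x i| ^ q i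
      = ∏ i, 2 / p * Gamma ((q i + 1) / p) := by
  have hd : -p < card ι + ∑ i, q i := by
    have : (card ι : ℝ) + ∑ i, q i = ∑ i, (1 + q i) := by
      simp [Finset.sum_add_distrib]
    have : 0 ≤ ∑ i, (1 + q i) := Finset.sum_nonneg fun i _ => by linarith [hq i]
    linarith
  have hg : ∀ c > 0, ∀ x : ι → ℝ, ∏ i, |(c • x) i| ^ q i = c ^ (∑ i, q i) * ∏ i, |x i| ^ q i := by
    intro c hc x
    simp_rw [rpow_sum_of_pos hc, ← Finset.prod_mul_distrib, Pi.smul_apply, smul_eq_mul, abs_mul,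
      abs_of_pos hc, mul_rpow hc.le (abs_nonneg _)]
  rw [← integral_mul_exp_neg_sum_abs_rpow_of_homogeneous hp hd (by fun_prop) hg
      (integrable_prod_abs_rpow_mul_exp_neg_sum_abs_rpow hp hq),
    integral_prod_abs_rpow_mul_exp_neg_sum_abs_rpow hp hq]

open Finset in
theorem setIntegral_lpSublevel_prod_sq (hp : 0 < p) (S : Finset ι) :
    ∫ x in lpSublevel p 1, ∏ i ∈ S, x i ^ 2
      = (2 / p * Gamma (1 / p)) ^ card ι * (Gamma (3 / p) / Gamma (1 / p)) ^ #S
        / Gamma ((card ι + 2 * #S) / p + 1) := by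
  classical
  set q : ι → ℝ := fun i => if i ∈ S then 2 else 0
  have hq : ∀ i, -1 < q i := fun i => by simp only [q]; split_ifs <;> norm_num
  have hmonomial : ∀ x : ι → ℝ, ∏ i ∈ S, x i ^ 2 = ∏ i, |x i| ^ q i := fun x => by
    simp [q, apply_ite]
  have hdeg : ∑ i, q i = 2 * #S := by simp [q, mul_comm]
  have hfactor : ∀ i, 2 / p * Gamma ((q i + 1) / p)
      = 2 / p * Gamma (1 / p) * if i ∈ S then Gamma (3 / p) / Gamma (1 / p) else 1 := fun i => by
    have := (Gamma_pos_of_pos (one_div_pos.2 hp)).ne'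
    simp only [q]; split_ifs <;> field_simp <;> norm_num
  have h := setIntegral_lpSublevel_prod_abs_rpow hp hq
  rw [prod_congr rfl fun i _ => hfactor i, prod_mul_distrib, Fintype.prod_ite_mem, prod_const,
    prod_const, card_univ, hdeg] at h
  simp_rw [← hmonomial] at h
  rw [← h, mul_div_cancel_left₀ _ (Gamma_pos_of_pos (by positivity)).ne']

end LpSublevel

section LpBall

variable {n : ℕ} {p : ℝ}

theorem integral_unif {K : Set (E n)} (g : E n → ℝ) :
    ∫ x, g x ∂unif K = (∫ x in K, g x) / volume.real K := by
  rw [unif, integral_smul_measure, ENNReal.toReal_inv, smul_eq_mul, Measure.real,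
    div_eq_inv_mul]

theorem setIntegral_lpBall (g : E n → ℝ) :
    ∫ x in lpBall n p, g x = ∫ y in lpSublevel p 1, g (WithLp.toLp 2 y) :=
  ((PiLp.volume_preserving_toLp (Fin n)).setIntegral_preimage_emb
    (MeasurableEquiv.toLp 2 _).measurableEmbedding g _).symm

open Finset in
theorem integral_unif_lpBall_prod_sq (hp : 0 < p) (S : Finset (Fin n)) :
    ∫ x, ∏ i ∈ S, x i ^ 2 ∂unif (lpBall n p)
      = (Gamma (3 / p) / Gamma (1 / p)) ^ #S
        * (Gamma (n / p + 1) / Gamma ((n + 2 * #S) / p + 1)) := by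
  have hvol : volume.real (lpBall n p)
      = ∫ x in lpBall n p, ∏ i ∈ (∅ : Finset (Fin n)), x i ^ 2 := by
    simp
  rw [integral_unif, hvol, setIntegral_lpBall, setIntegral_lpBall,
    setIntegral_lpSublevel_prod_sq hp, setIntegral_lpSublevel_prod_sq hp]
  have := (Gamma_pos_of_pos (one_div_pos.2 hp)).ne'
  have := (Gamma_pos_of_pos (by positivity : 0 < (n : ℝ) / p + 1)).ne'
  have := (Gamma_pos_of_pos (by positivity : 0 < ((n : ℝ) + 2 * #S) / p + 1)).ne'
  simp only [Fintype.card_fin, Finset.card_empty, CharP.cast_eq_zero, mul_zero, add_zero, pow_zero,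
    mul_one]
  field_simp

theorem integral_unif_lpBall_sq_mul_sq_sub_lt (hp : 0 < p) {i j : Fin n} (hij : i ≠ j) :
    (∫ x, x i ^ 2 * x j ^ 2 ∂unif (lpBall n p)) -
      (∫ x, x i ^ 2 ∂unif (lpBall n p)) * (∫ x, x j ^ 2 ∂unif (lpBall n p)) < 0 := by
  have hi := integral_unif_lpBall_prod_sq hp {i}
  have hj := integral_unif_lpBall_prod_sq hp {j}
  have hij' := integral_unif_lpBall_prod_sq hp {i, j}
  simp only [Finset.prod_singleton, Finset.card_singleton, Finset.prod_pair hij,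
    Finset.card_pair hij] at hi hj hij'
  rw [hij', hi, hj]
  have hG := Gamma_add_sq_lt (A := n / p + 1) (t := 2 / p) (by positivity) (by positivity)
  rw [show (n : ℝ) / p + 1 + 2 / p = (n + 2 * 1) / p + 1 by ring,
    show (n : ℝ) / p + 1 + 2 * (2 / p) = (n + 2 * 2) / p + 1 by ring] at hG
  push_cast
  set r := Gamma (3 / p) / Gamma (1 / p)
  set g₀ := Gamma (n / p + 1)
  set g₂ := Gamma ((n + 2 * 1) / p + 1)
  set g₄ := Gamma ((n + 2 * 2) / p + 1)
  have hr : 0 < r := div_pos (Gamma_pos_of_pos (by positivity)) (Gamma_pos_of_pos (by positivity))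
  have hg₀ : 0 < g₀ := Gamma_pos_of_pos (by positivity)
  have hg₂ : 0 < g₂ := Gamma_pos_of_pos (by positivity)
  have hg₄ : 0 < g₄ := Gamma_pos_of_pos (by positivity)
  have key : g₀ / g₄ < (g₀ / g₂) ^ 2 := by
    rw [div_pow, div_lt_div_iff₀ hg₄ (by positivity)]
    nlinarith
  nlinarith [mul_lt_mul_of_pos_left key (pow_pos hr 2)]

end LpBall

/-- For every `p ≥ 1` and `n ≥ 2`, a random vector uniformly distributed on
`B_p^n` satisfies `E[X₁²X₂²] - E[X₁²]E[X₂²] < 0`, i.e. `f(e₁,e₂) < 0`. -/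
theorem sncp_Bpn_canonical_strict
    (p : ℝ) (hp : 1 ≤ p) (n : ℕ) (hn : 2 ≤ n) :
    ((∫ x, (x (⟨0, by omega⟩ : Fin n)) ^ 2 * (x (⟨1, by omega⟩ : Fin n)) ^ 2
        ∂(unif (lpBall n p))) -
      (∫ x, (x (⟨0, by omega⟩ : Fin n)) ^ 2 ∂(unif (lpBall n p))) *
        (∫ x, (x (⟨1, by omega⟩ : Fin n)) ^ 2 ∂(unif (lpBall n p))) < 0) ∧
    covf (unif (lpBall n p)) (stdb (⟨0, by omega⟩ : Fin n)) (stdb ⟨1, by omega⟩) < 0 := by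
  have hcov := integral_unif_lpBall_sq_mul_sq_sub_lt (by linarith : 0 < p)
    (i := (⟨0, by omega⟩ : Fin n)) (j := ⟨1, by omega⟩) (by simp)
  exact ⟨hcov, by simpa [covf, stdb, EuclideanSpace.inner_single_right] using hcov⟩
end
end

section
/- The function F(x) = Γ(5x)·Γ(x)/Γ(3x)² is strictly increasing on the interval (0,1], and F(1/2) = 3. -/
/-!
By Euler's limit formula, `Γ(5x)Γ(x)/Γ(3x)² = ∏_{j ≥ 0} (3x + j)² / ((5x + j)(x + j))`. Since
`(3x + t)² = (5x + t)(x + t) + 4x²`, every factor equals `1 + 4 / ((5 + t/x)(1 + t/x))`, which is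
nondecreasing in `x > 0`, and strictly increasing when `t > 0`. Pulling the factor `j = 1` out of the
partial products keeps the strict inequality in the limit. The value at `1/2` follows from
`Γ(s + 1) = s Γ(s)`.
-/

open Real Filter Topology Finset Nat

theorem strictMonoOn_of_tendsto_mul {α ι : Type*} [Preorder α] {l : Filter ι} [l.NeBot]
    {s : Set α} {g F : α → ℝ} {h : ι → α → ℝ} (hg : StrictMonoOn g s) (hg₀ : ∀ x ∈ s, 0 < g x)
    (hh : ∀ i, MonotoneOn (h i) s) (hF₀ : ∀ x ∈ s, 0 < F x)
    (hF : ∀ x ∈ s, Tendsto (fun i => g x * h i x) l (𝓝 (F x))) : StrictMonoOn F s := by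
  intro x hx y hy hxy
  have hcross : g y * F x ≤ g x * F y := by
    refine le_of_tendsto_of_tendsto ((hF x hx).const_mul (g y)) ((hF y hy).const_mul (g x))
      (Eventually.of_forall fun i => ?_)
    calc g y * (g x * h i x) = g x * g y * h i x := by ring
      _ ≤ g x * g y * h i y :=
        mul_le_mul_of_nonneg_left (hh i hx hy hxy.le) (mul_pos (hg₀ x hx) (hg₀ y hy)).le
      _ = g x * (g y * h i y) := by ring
  have : g x * F x < g x * F y :=
    calc g x * F x < g y * F x := mul_lt_mul_of_pos_right (hg hx hy hxy) (hF₀ x hx)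
      _ ≤ g x * F y := by linarith
  exact lt_of_mul_lt_mul_left this (hg₀ x hx).le

theorem Real.GammaSeq_mul_GammaSeq_div_sq {a b c : ℝ} (habc : a + b = 2 * c) {n : ℕ}
    (hn : n ≠ 0) :
    GammaSeq a n * GammaSeq b n / GammaSeq c n ^ 2 =
      ∏ j ∈ range (n + 1), (c + j) ^ 2 / ((a + j) * (b + j)) := by
  have hn' : (0 : ℝ) < n := by positivity
  have hpow : (n : ℝ) ^ a * (n : ℝ) ^ b = ((n : ℝ) ^ c) ^ 2 := by
    rw [← rpow_add hn', ← rpow_natCast, ← rpow_mul hn'.le, habc]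
    norm_num [mul_comm]
  have hc : (n : ℝ) ^ c ≠ 0 := (rpow_pos_of_pos hn' c).ne'
  have hfac : (n ! : ℝ) ≠ 0 := by positivity
  rw [prod_div_distrib, prod_mul_distrib, prod_pow]
  simp only [GammaSeq]
  field_simp
  rw [hpow]

theorem Real.tendsto_prod_Gamma_mul_Gamma_div_sq {a b c : ℝ} (habc : a + b = 2 * c)
    (hc : Gamma c ≠ 0) :
    Tendsto (fun n : ℕ => ∏ j ∈ range (n + 1), (c + j) ^ 2 / ((a + j) * (b + j))) atTop
      (𝓝 (Gamma a * Gamma b / Gamma c ^ 2)) := by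
  refine (((GammaSeq_tendsto_Gamma a).mul (GammaSeq_tendsto_Gamma b)).div
    ((GammaSeq_tendsto_Gamma c).pow 2) (pow_ne_zero 2 hc)).congr' ?_
  filter_upwards [eventually_ne_atTop 0] with n hn
  exact GammaSeq_mul_GammaSeq_div_sq habc hn

noncomputable def gurlandFactor (x t : ℝ) : ℝ := (3 * x + t) ^ 2 / ((5 * x + t) * (x + t))

theorem gurlandFactor_pos {x t : ℝ} (hx : 0 < x) (ht : 0 ≤ t) : 0 < gurlandFactor x t := by
  unfold gurlandFactor
  positivity

-- `(3y + t)²(5x + t)(x + t) - (3x + t)²(5y + t)(y + t) = 4t(y - x)(t(x + y) + 6xy)`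
theorem gurlandFactor_monotoneOn {t : ℝ} (ht : 0 ≤ t) :
    MonotoneOn (gurlandFactor · t) (Set.Ioi 0) := by
  intro x (hx : 0 < x) y (hy : 0 < y) hxy
  unfold gurlandFactor
  rw [div_le_div_iff₀ (by positivity) (by positivity)]
  nlinarith [mul_nonneg (mul_nonneg ht (sub_nonneg.2 hxy))
    (by positivity : 0 ≤ t * (x + y) + 6 * (x * y))]

theorem gurlandFactor_strictMonoOn {t : ℝ} (ht : 0 < t) :
    StrictMonoOn (gurlandFactor · t) (Set.Ioi 0) := by
  intro x (hx : 0 < x) y (hy : 0 < y) hxy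
  unfold gurlandFactor
  rw [div_lt_div_iff₀ (by positivity) (by positivity)]
  nlinarith [mul_pos (mul_pos ht (sub_pos.2 hxy))
    (by positivity : 0 < t * (x + y) + 6 * (x * y))]

theorem tendsto_prod_gurlandFactor {x : ℝ} (hx : 0 < x) :
    Tendsto (fun n : ℕ => ∏ j ∈ range (n + 1), gurlandFactor x j) atTop
      (𝓝 (Gamma (5 * x) * Gamma x / Gamma (3 * x) ^ 2)) :=
  tendsto_prod_Gamma_mul_Gamma_div_sq (by ring) (Gamma_pos_of_pos (by positivity)).ne'

theorem gurland_ratio_strictMonoOn_Ioi :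
    StrictMonoOn (fun x : ℝ => Gamma (5 * x) * Gamma x / Gamma (3 * x) ^ 2) (Set.Ioi 0) := by
  refine strictMonoOn_of_tendsto_mul (l := atTop)
    (h := fun n x => ∏ j ∈ (range (n + 1)).erase 1, gurlandFactor x j)
    (gurlandFactor_strictMonoOn one_pos) (fun x hx => gurlandFactor_pos hx zero_le_one)
    (fun n x hx y hy hxy => prod_le_prod (fun j _ => (gurlandFactor_pos hx j.cast_nonneg).le)
      fun j _ => gurlandFactor_monotoneOn j.cast_nonneg hx hy hxy)
    (fun x (hx : 0 < x) => by have := Gamma_pos_of_pos hx; positivity) fun x hx => ?_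
  refine (tendsto_prod_gurlandFactor hx).congr' ?_
  filter_upwards [eventually_ne_atTop 0] with n hn
  rw [← mul_prod_erase _ _ (mem_range.2 (by omega : 1 < n + 1)), Nat.cast_one]

/-- Gurland's ratio `F(x) = Γ(5x)Γ(x)/Γ(3x)²` is strictly increasing on `(0,1]`
and `F(1/2) = 3`. -/
theorem gurland_ratio_strictMonoOn :
    StrictMonoOn (fun x : ℝ => Real.Gamma (5 * x) * Real.Gamma x / Real.Gamma (3 * x) ^ 2)
      (Set.Ioc 0 1) ∧
    Real.Gamma (5 * (1 / 2 : ℝ)) * Real.Gamma (1 / 2 : ℝ) /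
      Real.Gamma (3 * (1 / 2 : ℝ)) ^ 2 = 3 := by
  refine ⟨gurland_ratio_strictMonoOn_Ioi.mono Set.Ioc_subset_Ioi_self, ?_⟩
  have h₃ : Gamma (3 * (1 / 2)) = 1 / 2 * Gamma (1 / 2) := by
    rw [show (3 : ℝ) * (1 / 2) = 1 / 2 + 1 by norm_num, Gamma_add_one (by norm_num)]
  have h₅ : Gamma (5 * (1 / 2)) = 3 * (1 / 2) * Gamma (3 * (1 / 2)) := by
    rw [show (5 : ℝ) * (1 / 2) = 3 * (1 / 2) + 1 by norm_num, Gamma_add_one (by norm_num)]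
  have : Gamma (1 / 2) ≠ 0 := (Gamma_pos_of_pos (by norm_num)).ne'
  rw [h₅, h₃]
  field_simp
end

section
/- Let n ≥ 2 and let η1, η2 ∈ S^{n−1} be orthonormal vectors in ℝ^n (|η1| = |η2| = 1 and ⟨η1,η2⟩ = 0). Then 0 ≤ Σ_{i=1}^n η1(i)² η2(i)² ≤ 1/2. The lower bound is attained at any two distinct vectors of the canonical basis, and the upper bound is attained at the vectors ξ1 = (e_i+e_j)/√2 and ξ2 = (e_i−e_j)/√2 for any i ≠ j. -/
/-! The upper bound comes from the identity
`∑ᵢ ∑ⱼ (aᵢbⱼ + aⱼbᵢ)² = 2 (‖a‖²‖b‖² + ⟪a, b⟫²)`: the diagonal terms `i = j` alone contribute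
`4 ∑ᵢ aᵢ²bᵢ²`, so for orthonormal `a, b` this sum is at most `1/2`. -/

open scoped RealInnerProductSpace

noncomputable section

open Finset

theorem sum_sum_mul_add_mul_sq {ι : Type*} [Fintype ι] (a b : ι → ℝ) :
    ∑ i, ∑ j, (a i * b j + a j * b i) ^ 2 =
      2 * ((∑ i, a i ^ 2) * ∑ i, b i ^ 2 + (∑ i, a i * b i) ^ 2) := by
  have expand : ∀ i j, (a i * b j + a j * b i) ^ 2 =
      a i ^ 2 * b j ^ 2 + b i ^ 2 * a j ^ 2 + 2 * (a i * b i) * (a j * b j) := fun i j => by ring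
  simp only [expand, sum_add_distrib, ← mul_sum, ← sum_mul]
  ring

theorem two_mul_sum_sq_mul_sq_le {ι : Type*} [Fintype ι] (a b : ι → ℝ) :
    2 * ∑ i, a i ^ 2 * b i ^ 2 ≤ (∑ i, a i ^ 2) * (∑ i, b i ^ 2) + (∑ i, a i * b i) ^ 2 := by
  have diagonal_le : ∑ i, (a i * b i + a i * b i) ^ 2 ≤ ∑ i, ∑ j, (a i * b j + a j * b i) ^ 2 :=
    sum_le_sum fun i _ =>
      single_le_sum (f := fun j => (a i * b j + a j * b i) ^ 2) (fun _ _ => sq_nonneg _)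
        (mem_univ i)
  have diagonal_eq : ∑ i, (a i * b i + a i * b i) ^ 2 = 4 * ∑ i, a i ^ 2 * b i ^ 2 := by
    rw [mul_sum]
    exact sum_congr rfl fun i _ => by ring
  rw [diagonal_eq, sum_sum_mul_add_mul_sq] at diagonal_le
  linarith

theorem EuclideanSpace.two_mul_sum_sq_mul_sq_le {ι : Type*} [Fintype ι]
    (x y : EuclideanSpace ℝ ι) :
    2 * ∑ i, x i ^ 2 * y i ^ 2 ≤ ‖x‖ ^ 2 * ‖y‖ ^ 2 + ⟪x, y⟫ ^ 2 := by
  have hinner : ⟪x, y⟫ = ∑ i, x i * y i := by simp [PiLp.inner_apply, mul_comm]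
  simpa only [EuclideanSpace.norm_sq_eq, Real.norm_eq_abs, sq_abs, hinner]
    using _root_.two_mul_sum_sq_mul_sq_le (x ·) (y ·)

theorem sum_sq_mul_sq_le_half_of_orthonormal {ι : Type*} [Fintype ι]
    {x y : EuclideanSpace ℝ ι} (hx : ‖x‖ = 1) (hy : ‖y‖ = 1) (hxy : ⟪x, y⟫ = 0) :
    ∑ i, x i ^ 2 * y i ^ 2 ≤ 1 / 2 := by
  have := EuclideanSpace.two_mul_sum_sq_mul_sq_le x y
  rw [hx, hy, hxy] at this
  linarith

theorem stdb_apply {n : ℕ} (i k : Fin n) : stdb i k = if k = i then 1 else 0 :=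
  PiLp.single_apply 2 ℝ i 1 k

theorem sum_stdb_sq_mul_stdb_sq_of_ne {n : ℕ} {i j : Fin n} (hij : i ≠ j) :
    ∑ k, stdb i k ^ 2 * stdb j k ^ 2 = 0 :=
  sum_eq_zero fun k _ => by
    rcases eq_or_ne k i with rfl | hki
    · simp [stdb_apply, hij]
    · simp [stdb_apply, hki]

theorem sum_sq_mul_sq_stdb_add_stdb_sub {n : ℕ} {i j : Fin n} (hij : i ≠ j) :
    ∑ k, ((Real.sqrt 2)⁻¹ • (stdb i + stdb j)) k ^ 2 *
      ((Real.sqrt 2)⁻¹ • (stdb i - stdb j)) k ^ 2 = 1 / 2 := by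
  have hsqrt : ((Real.sqrt 2)⁻¹ : ℝ) ^ 2 = 1 / 2 := by
    rw [inv_pow, Real.sq_sqrt zero_le_two, one_div]
  rw [Fintype.sum_eq_add i j hij fun k ⟨hki, hkj⟩ => by simp [stdb_apply, hki, hkj]]
  simp only [PiLp.smul_apply, PiLp.add_apply, PiLp.sub_apply, stdb_apply, if_neg hij,
    if_neg hij.symm, smul_eq_mul, mul_pow, hsqrt]
  norm_num

theorem sum_sq_sq_bounds_general (n : ℕ) :
    (∀ η₁ η₂ : E n, ‖η₁‖ = 1 → ‖η₂‖ = 1 → ⟪η₁, η₂⟫ = 0 →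
      0 ≤ ∑ i, η₁ i ^ 2 * η₂ i ^ 2 ∧ ∑ i, η₁ i ^ 2 * η₂ i ^ 2 ≤ 1 / 2) ∧
    (∀ i j : Fin n, i ≠ j → ∑ k, (stdb i) k ^ 2 * (stdb j) k ^ 2 = 0) ∧
    (∀ i j : Fin n, i ≠ j →
      ∑ k, ((Real.sqrt 2)⁻¹ • (stdb i + stdb j)) k ^ 2 *
        ((Real.sqrt 2)⁻¹ • (stdb i - stdb j)) k ^ 2 = 1 / 2) :=
  ⟨fun _ _ h₁ h₂ h₁₂ => ⟨sum_nonneg fun _ _ => by positivity,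
      sum_sq_mul_sq_le_half_of_orthonormal h₁ h₂ h₁₂⟩,
    fun _ _ => sum_stdb_sq_mul_stdb_sq_of_ne,
    fun _ _ => sum_sq_mul_sq_stdb_add_stdb_sub⟩

/-- if `η₁, η₂` are orthonormal then `0 ≤ ∑ η₁(i)²η₂(i)² ≤ 1/2`; the lower bound
is attained at any two distinct canonical basis vectors and the upper bound at
`ξ₁ = (eᵢ+eⱼ)/√2`, `ξ₂ = (eᵢ-eⱼ)/√2` for any `i ≠ j`. -/
theorem sum_sq_sq_bounds (n : ℕ) (hn : 2 ≤ n) :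
    (∀ η₁ η₂ : E n, ‖η₁‖ = 1 → ‖η₂‖ = 1 → ⟪η₁, η₂⟫ = 0 →
      0 ≤ ∑ i, η₁ i ^ 2 * η₂ i ^ 2 ∧ ∑ i, η₁ i ^ 2 * η₂ i ^ 2 ≤ 1 / 2) ∧
    (∀ i j : Fin n, i ≠ j → ∑ k, (stdb i) k ^ 2 * (stdb j) k ^ 2 = 0) ∧
    (∀ i j : Fin n, i ≠ j →
      ∑ k, ((Real.sqrt 2)⁻¹ • (stdb i + stdb j)) k ^ 2 *
        ((Real.sqrt 2)⁻¹ • (stdb i - stdb j)) k ^ 2 = 1 / 2) :=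
  sum_sq_sq_bounds_general n
end
end
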